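/- Define F̃(ε) := (Σ'_{k∈ℤ²∖{0}} (ε+|k|²)^{−2}) / (Σ'_{k∈ℤ²∖{0}} |k|^{−2}(ε+|k|²)^{−2}), where Σ' denotes summation over k∈ℤ²∖{0}. Then F̃ is strictly increasing on (−1,∞). -/
import Mathlib


open Real

noncomputable section

/-- `|k|² = k₁² + k₂²` as a real number, for `k ∈ ℤ²`. -/
def ksq (k : ℤ × ℤ) : ℝ := (k.1 : ℝ) ^ 2 + (k.2 : ℝ) ^ 2

lemma ksq_nonneg (k : ℤ × ℤ) : 0 ≤ ksq k := by unfold ksq; positivity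

lemma one_le_ksq {k : ℤ × ℤ} (hk : k ≠ 0) : 1 ≤ ksq k := by
  have h : k.1 ≠ 0 ∨ k.2 ≠ 0 := by
    by_contra h
    push_neg at h
    exact hk (Prod.ext h.1 h.2)
  unfold ksq
  rcases h with h | h
  · have h1 : (1 : ℤ) ≤ k.1 ^ 2 := by
      rcases lt_or_gt_of_ne h with h' | h' <;> nlinarith
    have h2 : (1 : ℝ) ≤ (k.1 : ℝ) ^ 2 := by exact_mod_cast h1
    nlinarith [sq_nonneg (k.2 : ℝ)]
  · have h1 : (1 : ℤ) ≤ k.2 ^ 2 := by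
      rcases lt_or_gt_of_ne h with h' | h' <;> nlinarith
    have h2 : (1 : ℝ) ≤ (k.2 : ℝ) ^ 2 := by exact_mod_cast h1
    nlinarith [sq_nonneg (k.1 : ℝ)]

lemma summable_aux_nat : Summable (fun n : ℕ => (1 + (n : ℝ) ^ 2)⁻¹) := by
  have h0 : Summable (fun n : ℕ => 1 / (n : ℝ) ^ 2) :=
    summable_one_div_nat_pow.mpr one_lt_two
  have h1 : Summable (fun n : ℕ => 2 * (1 / ((n : ℝ) + 1) ^ 2)) := by
    have := (summable_nat_add_iff (f := fun n : ℕ => 1 / (n : ℝ) ^ 2) 1).mpr h0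
    refine (this.mul_left 2).congr fun n => ?_
    push_cast
    ring
  refine Summable.of_nonneg_of_le (fun n => by positivity) (fun n => ?_) h1
  have hn : (0 : ℝ) < 1 + (n : ℝ) ^ 2 := by positivity
  have hn1 : (0 : ℝ) < ((n : ℝ) + 1) ^ 2 := by positivity
  rw [inv_le_iff_one_le_mul₀ hn, one_div]
  have h2 : ((n : ℝ) + 1) ^ 2 * (((n : ℝ) + 1) ^ 2)⁻¹ = 1 := mul_inv_cancel₀ (ne_of_gt hn1)
  nlinarith [h2, mul_nonneg (inv_pos.mpr hn1).le (sq_nonneg ((n : ℝ) - 1))]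

lemma summable_aux_int : Summable (fun n : ℤ => (1 + (n : ℝ) ^ 2)⁻¹) := by
  apply Summable.of_nat_of_neg
  · exact summable_aux_nat.congr fun n => by push_cast; ring
  · exact summable_aux_nat.congr fun n => by push_cast; ring

lemma summable_base :
    Summable (fun k : ℤ × ℤ => if k = 0 then 0 else ((ksq k) ^ 2)⁻¹) := by
  have hprod : Summable (fun k : ℤ × ℤ =>
      (2 * (1 + (k.1 : ℝ) ^ 2)⁻¹) * (2 * (1 + (k.2 : ℝ) ^ 2)⁻¹)) :=
    (summable_aux_int.mul_left 2).mul_of_nonneg (summable_aux_int.mul_left 2)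
      (fun n => by positivity) (fun n => by positivity)
  refine Summable.of_nonneg_of_le (fun k => ?_) (fun k => ?_) hprod
  · split <;> positivity
  · by_cases hk : k = 0
    · simp only [hk, if_pos rfl]
      positivity
    · rw [if_neg hk]
      have hK := one_le_ksq hk
      have hKpos : (0 : ℝ) < ksq k := by linarith
      have h1 : (0 : ℝ) < 1 + (k.1 : ℝ) ^ 2 := by positivity
      have h2 : (0 : ℝ) < 1 + (k.2 : ℝ) ^ 2 := by positivity
      have hkey : (1 + (k.1 : ℝ) ^ 2) * (1 + (k.2 : ℝ) ^ 2) ≤ 4 * (ksq k) ^ 2 := by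
        unfold ksq at *
        nlinarith [sq_nonneg ((k.1 : ℝ) ^ 2 + (k.2 : ℝ) ^ 2),
          sq_nonneg ((k.1 : ℝ) * (k.2 : ℝ))]
      have h3 : ((ksq k) ^ 2)⁻¹ ≤ 4 * ((1 + (k.1 : ℝ) ^ 2) * (1 + (k.2 : ℝ) ^ 2))⁻¹ := by
        rw [inv_le_iff_one_le_mul₀ (by positivity)]
        have h4 : (0 : ℝ) < ((1 + (k.1 : ℝ) ^ 2) * (1 + (k.2 : ℝ) ^ 2))⁻¹ := by positivity
        calc (1 : ℝ) = ((1 + (k.1 : ℝ) ^ 2) * (1 + (k.2 : ℝ) ^ 2)) *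
              ((1 + (k.1 : ℝ) ^ 2) * (1 + (k.2 : ℝ) ^ 2))⁻¹ := by
              rw [mul_inv_cancel₀ (by positivity)]
          _ ≤ (4 * (ksq k) ^ 2) * ((1 + (k.1 : ℝ) ^ 2) * (1 + (k.2 : ℝ) ^ 2))⁻¹ := by
              apply mul_le_mul_of_nonneg_right hkey (le_of_lt h4)
          _ = 4 * ((1 + (k.1 : ℝ) ^ 2) * (1 + (k.2 : ℝ) ^ 2))⁻¹ * (ksq k) ^ 2 := by ring
      calc ((ksq k) ^ 2)⁻¹ ≤ 4 * ((1 + (k.1 : ℝ) ^ 2) * (1 + (k.2 : ℝ) ^ 2))⁻¹ := h3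
        _ = (2 * (1 + (k.1 : ℝ) ^ 2)⁻¹) * (2 * (1 + (k.2 : ℝ) ^ 2)⁻¹) := by
            rw [mul_inv]; ring

lemma eps_add_pos {ε : ℝ} (hε : -1 < ε) {k : ℤ × ℤ} (hk : k ≠ 0) :
    0 < ε + ksq k := by
  have := one_le_ksq hk
  linarith

lemma summable_f {ε : ℝ} (hε : -1 < ε) :
    Summable (fun k : ℤ × ℤ => if k = 0 then 0 else ((ε + ksq k) ^ 2)⁻¹) := by
  set c : ℝ := min 1 (1 + ε) with hc
  have hc0 : 0 < c := lt_min one_pos (by linarith)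
  refine Summable.of_nonneg_of_le (fun k => ?_) (fun k => ?_)
    (summable_base.mul_left ((c ^ 2)⁻¹))
  · split <;> positivity
  · by_cases hk : k = 0
    · simp [hk]
    · rw [if_neg hk, if_neg hk]
      have hK := one_le_ksq hk
      have hKpos : (0 : ℝ) < ksq k := by linarith
      have hck : c * ksq k ≤ ε + ksq k := by
        have h1 : c ≤ 1 := min_le_left _ _
        have h2 : c ≤ 1 + ε := min_le_right _ _
        nlinarith
      have hck0 : 0 < c * ksq k := by positivity
      have hsq : (c * ksq k) ^ 2 ≤ (ε + ksq k) ^ 2 := by nlinarith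
      calc ((ε + ksq k) ^ 2)⁻¹ ≤ ((c * ksq k) ^ 2)⁻¹ :=
            inv_anti₀ (by positivity) hsq
        _ = (c ^ 2)⁻¹ * ((ksq k) ^ 2)⁻¹ := by rw [mul_pow, mul_inv]

lemma f_le_g_aux {ε : ℝ} (hε : -1 < ε) (k : ℤ × ℤ) :
    (if k = 0 then 0 else (ksq k * (ε + ksq k) ^ 2)⁻¹) ≤
      (if k = 0 then 0 else ((ε + ksq k) ^ 2)⁻¹) := by
  by_cases hk : k = 0
  · simp [hk]
  · rw [if_neg hk, if_neg hk]
    have hK := one_le_ksq hk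
    have hp := eps_add_pos hε hk
    rw [mul_inv]
    have h1 : (ksq k)⁻¹ ≤ 1 := inv_le_one_of_one_le₀ hK
    have h2 : (0 : ℝ) ≤ ((ε + ksq k) ^ 2)⁻¹ := by positivity
    calc (ksq k)⁻¹ * ((ε + ksq k) ^ 2)⁻¹ ≤ 1 * ((ε + ksq k) ^ 2)⁻¹ :=
          mul_le_mul_of_nonneg_right h1 h2
      _ = ((ε + ksq k) ^ 2)⁻¹ := one_mul _

lemma g_nonneg {ε : ℝ} (k : ℤ × ℤ) :
    0 ≤ (if k = 0 then 0 else (ksq k * (ε + ksq k) ^ 2)⁻¹) := by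
  by_cases hk : k = 0
  · simp [hk]
  · rw [if_neg hk]
    exact inv_nonneg.2 (mul_nonneg (ksq_nonneg _) (sq_nonneg _))

lemma summable_g {ε : ℝ} (hε : -1 < ε) :
    Summable (fun k : ℤ × ℤ => if k = 0 then 0 else (ksq k * (ε + ksq k) ^ 2)⁻¹) := by
  exact Summable.of_nonneg_of_le (fun k => g_nonneg k) (f_le_g_aux hε) (summable_f hε)

lemma f_nonneg {ε : ℝ} (k : ℤ × ℤ) :
    0 ≤ (if k = 0 then 0 else ((ε + ksq k) ^ 2)⁻¹) := by split <;> positivity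

lemma one_zero_ne : ((1 : ℤ), (0 : ℤ)) ≠ (0 : ℤ × ℤ) := by decide

lemma two_zero_ne : ((2 : ℤ), (0 : ℤ)) ≠ (0 : ℤ × ℤ) := by decide

lemma ksq_one_zero : ksq ((1 : ℤ), (0 : ℤ)) = 1 := by norm_num [ksq]

lemma ksq_two_zero : ksq ((2 : ℤ), (0 : ℤ)) = 4 := by norm_num [ksq]

lemma B_pos {ε : ℝ} (hε : -1 < ε) :
    0 < ∑' k : ℤ × ℤ, if k = 0 then 0 else (ksq k * (ε + ksq k) ^ 2)⁻¹ := by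
  refine Summable.tsum_pos (summable_g hε) (fun k => g_nonneg k) ((1 : ℤ), (0 : ℤ)) ?_
  rw [if_neg one_zero_ne, ksq_one_zero]
  have : 0 < ε + 1 := by linarith
  positivity

lemma key_identity {a b K L : ℝ} (hx : 0 < a + K) (hy : 0 < b + K)
    (hu : 0 < a + L) (hv : 0 < b + L) (hK : 0 < K) (hL : 0 < L) :
    ((b + K) ^ 2)⁻¹ * (L * (a + L) ^ 2)⁻¹ - ((a + K) ^ 2)⁻¹ * (L * (b + L) ^ 2)⁻¹
      + (((b + L) ^ 2)⁻¹ * (K * (a + K) ^ 2)⁻¹ - ((a + L) ^ 2)⁻¹ * (K * (b + K) ^ 2)⁻¹)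
    = (b - a) * (K - L) ^ 2 * ((a + K) * (b + L) + (b + K) * (a + L)) /
        (K * L * ((a + K) * (b + K) * (a + L) * (b + L)) ^ 2) := by
  have hx' := hx.ne'
  have hy' := hy.ne'
  have hu' := hu.ne'
  have hv' := hv.ne'
  have hK' := hK.ne'
  have hL' := hL.ne'
  field_simp
  ring

lemma key_nonneg {a b K L : ℝ} (ha : -1 < a) (hab : a ≤ b)
    (hK : 1 ≤ K) (hL : 1 ≤ L) :
    0 ≤ ((b + K) ^ 2)⁻¹ * (L * (a + L) ^ 2)⁻¹ - ((a + K) ^ 2)⁻¹ * (L * (b + L) ^ 2)⁻¹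
      + (((b + L) ^ 2)⁻¹ * (K * (a + K) ^ 2)⁻¹
        - ((a + L) ^ 2)⁻¹ * (K * (b + K) ^ 2)⁻¹) := by
  have hb : -1 < b := lt_of_lt_of_le ha hab
  have hx : 0 < a + K := by linarith
  have hy : 0 < b + K := by linarith
  have hu : 0 < a + L := by linarith
  have hv : 0 < b + L := by linarith
  have hK0 : (0 : ℝ) < K := by linarith
  have hL0 : (0 : ℝ) < L := by linarith
  rw [key_identity hx hy hu hv hK0 hL0]
  apply div_nonneg
  · have h1 : 0 ≤ b - a := by linarith
    have h2 : 0 < (a + K) * (b + L) + (b + K) * (a + L) := by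
      have := mul_pos hx hv
      have := mul_pos hy hu
      linarith
    positivity
  · have h3 : 0 < (a + K) * (b + K) * (a + L) * (b + L) := by positivity
    positivity

lemma key_pos {a b K L : ℝ} (ha : -1 < a) (hab : a < b)
    (hK : 1 ≤ K) (hL : 1 ≤ L) (hKL : K ≠ L) :
    0 < ((b + K) ^ 2)⁻¹ * (L * (a + L) ^ 2)⁻¹ - ((a + K) ^ 2)⁻¹ * (L * (b + L) ^ 2)⁻¹
      + (((b + L) ^ 2)⁻¹ * (K * (a + K) ^ 2)⁻¹
        - ((a + L) ^ 2)⁻¹ * (K * (b + K) ^ 2)⁻¹) := by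
  have hb : -1 < b := lt_trans ha hab
  have hx : 0 < a + K := by linarith
  have hy : 0 < b + K := by linarith
  have hu : 0 < a + L := by linarith
  have hv : 0 < b + L := by linarith
  have hK0 : (0 : ℝ) < K := by linarith
  have hL0 : (0 : ℝ) < L := by linarith
  rw [key_identity hx hy hu hv hK0 hL0]
  apply div_pos
  · have h1 : 0 < b - a := by linarith
    have h2 : 0 < (a + K) * (b + L) + (b + K) * (a + L) := by
      have := mul_pos hx hv
      have := mul_pos hy hu
      linarith
    have hsq : (0 : ℝ) < (K - L) ^ 2 :=
      (sq_nonneg _).lt_of_ne (Ne.symm (pow_ne_zero _ (sub_ne_zero.mpr hKL)))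
    positivity
  · have h3 : 0 < (a + K) * (b + K) * (a + L) * (b + L) := by positivity
    positivity

/-- The function `F̃(ε) = (Σ'_{k≠0} (ε+|k|²)^{-2}) / (Σ'_{k≠0} |k|^{-2}(ε+|k|²)^{-2})`
is strictly increasing on `(−1, ∞)`. -/
theorem Ftilde_strictMonoOn :
    StrictMonoOn
      (fun ε : ℝ =>
        (∑' k : ℤ × ℤ, if k = 0 then 0 else ((ε + ksq k) ^ 2)⁻¹) /
          (∑' k : ℤ × ℤ, if k = 0 then 0 else (ksq k * (ε + ksq k) ^ 2)⁻¹))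
      (Set.Ioi (-1 : ℝ)) := by
  intro a ha b hb hab
  simp only [Set.mem_Ioi] at ha hb
  set f : ℝ → ℤ × ℤ → ℝ := fun ε k => if k = 0 then 0 else ((ε + ksq k) ^ 2)⁻¹ with hfdef
  set g : ℝ → ℤ × ℤ → ℝ := fun ε k => if k = 0 then 0 else (ksq k * (ε + ksq k) ^ 2)⁻¹
    with hgdef
  show (∑' k, f a k) / (∑' k, g a k) < (∑' k, f b k) / (∑' k, g b k)
  rw [div_lt_div_iff₀ (B_pos ha) (B_pos hb)]
  -- product summabilities
  have hFa : Summable (fun z : (ℤ × ℤ) × (ℤ × ℤ) => f a z.1 * g b z.2) :=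
    (summable_f ha).mul_of_nonneg (summable_g hb) (fun k => f_nonneg k)
      (fun k => g_nonneg k)
  have hFb : Summable (fun z : (ℤ × ℤ) × (ℤ × ℤ) => f b z.1 * g a z.2) :=
    (summable_f hb).mul_of_nonneg (summable_g ha) (fun k => f_nonneg k)
      (fun k => g_nonneg k)
  rw [Summable.tsum_mul_tsum (summable_f ha) (summable_g hb) hFa,
    Summable.tsum_mul_tsum (summable_f hb) (summable_g ha) hFb]
  -- the difference function
  set D : (ℤ × ℤ) × (ℤ × ℤ) → ℝ :=
    fun z => f b z.1 * g a z.2 - f a z.1 * g b z.2 with hDdef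
  have hD : Summable D := hFb.sub hFa
  have hDs : Summable (fun z : (ℤ × ℤ) × (ℤ × ℤ) => D z.swap) := by
    have := hD.comp_injective (Prod.swap_injective (α := ℤ × ℤ) (β := ℤ × ℤ))
    exact this
  have hswap_eq : ∑' z : (ℤ × ℤ) × (ℤ × ℤ), D z.swap = ∑' z, D z := by
    have := (Equiv.prodComm (ℤ × ℤ) (ℤ × ℤ)).tsum_eq D
    simpa [Equiv.prodComm] using this
  -- pointwise nonnegativity of the symmetrization
  have hE_nonneg : ∀ z : (ℤ × ℤ) × (ℤ × ℤ), 0 ≤ D z + D z.swap := by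
    rintro ⟨k, l⟩
    by_cases hk : k = 0
    · simp [hDdef, hfdef, hgdef, hk]
    by_cases hl : l = 0
    · simp [hDdef, hfdef, hgdef, hl]
    simp only [hDdef, hfdef, hgdef, Prod.swap_prod_mk, if_neg hk, if_neg hl]
    have := key_nonneg ha (le_of_lt hab) (one_le_ksq hk) (one_le_ksq hl)
    linarith
  have hE_pos : 0 < D (((1 : ℤ), (0 : ℤ)), ((2 : ℤ), (0 : ℤ)))
      + D ((((1 : ℤ), (0 : ℤ)), ((2 : ℤ), (0 : ℤ))) : (ℤ × ℤ) × (ℤ × ℤ)).swap := by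
    simp only [hDdef, hfdef, hgdef, Prod.swap_prod_mk, if_neg one_zero_ne,
      if_neg two_zero_ne, ksq_one_zero, ksq_two_zero]
    have := key_pos ha hab (le_refl (1 : ℝ)) (by norm_num : (1 : ℝ) ≤ 4)
      (by norm_num : (1 : ℝ) ≠ 4)
    linarith
  have hEpos : 0 < ∑' z : (ℤ × ℤ) × (ℤ × ℤ), (D z + D z.swap) :=
    Summable.tsum_pos (hD.add hDs) hE_nonneg _ hE_pos
  rw [Summable.tsum_add hD hDs, hswap_eq] at hEpos
  have hdiff : 0 < ∑' z, D z := by linarith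
  have hsub : ∑' z, D z =
      (∑' z : (ℤ × ℤ) × (ℤ × ℤ), f b z.1 * g a z.2)
        - ∑' z : (ℤ × ℤ) × (ℤ × ℤ), f a z.1 * g b z.2 := Summable.tsum_sub hFb hFa
  rw [hsub] at hdiff
  linarith

end
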